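/- The equation of periods y = R(y) has at least one solution y ∈ [0,∞), and every solution is strictly positive. -/

import Mathlib

open Matrix NormedSpace

/-- The `m×m` matrix with diagonal entries `-a i`, subdiagonal entries `g i`, zero elsewhere. -/
def igoA (m : ℕ) (a : Fin m → ℝ) (g : Fin (m - 1) → ℝ) : Matrix (Fin m) (Fin m) ℝ :=
  fun i j =>
    if i = j then -a i
    else if h : (i : ℕ) = (j : ℕ) + 1 then g ⟨(j : ℕ), by have := i.isLt; omega⟩
    else 0

/-- The first standard basis vector `e₁` of `ℝ^m`. -/
def igoB (m : ℕ) : Fin m → ℝ := fun i => if (i : ℕ) = 0 then 1 else 0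

/-- The last standard basis vector `e_m` of `ℝ^m` (acting as the row `C = e_mᵀ`). -/
def igoC (m : ℕ) : Fin m → ℝ := fun i => if (i : ℕ) = m - 1 then 1 else 0

/-- The function `R(y) = F(y) · C (exp(−Φ(y)A) − I)⁻¹ B` of the equation of periods. -/
noncomputable def igoR (m : ℕ) (a : Fin m → ℝ) (g : Fin (m - 1) → ℝ)
    (Φ F : ℝ → ℝ) (y : ℝ) : ℝ :=
  F y * (igoC m ⬝ᵥ ((exp (-(Φ y) • igoA m a g) - 1)⁻¹ :
    Matrix (Fin m) (Fin m) ℝ).mulVec (igoB m))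

/-!
Shifting a Metzler matrix by a multiple of the identity makes it entrywise nonnegative, so for
`ξ > 0` the matrix `P = exp (ξ A)` is entrywise nonnegative, and the positive subdiagonal chain
`1 → 2 → ⋯ → m` makes its corner entry `P m 1` positive. Conjugating `A` by `diag (c ^ i)`
multiplies its subdiagonal by `c`; for small `c` the exponential of the conjugate is close to
`diag (exp (-ξ a))`, so its ∞-operator norm is `< 1`. For this conjugate the Neumann series gives
`(exp (-ξ A) - 1)⁻¹ = ∑_{k ≥ 1} P ^ k`, whose corner entry is `≥ P m 1 > 0`, and conjugating back
preserves the sign of that entry. Hence `R` is positive, continuous and bounded on `[0, ∞)`; the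
intermediate value theorem applied to `R y - y` yields a solution, and every solution is `R y > 0`.
-/

lemma exists_eq_apply_of_continuousOn_Ici {f : ℝ → ℝ} (hf : ContinuousOn f (Set.Ici 0))
    (h0 : 0 ≤ f 0) {B : ℝ} (hB : ∀ y ≥ 0, f y ≤ B) : ∃ y ≥ 0, y = f y := by
  have hB' : 0 ≤ max B 0 := le_max_right _ _
  have hsub : ContinuousOn (fun y => f y - y) (Set.Icc 0 (max B 0)) :=
    (hf.mono Set.Icc_subset_Ici_self).sub continuousOn_id
  obtain ⟨y, hy, hfy⟩ := intermediate_value_Icc' hB' hsub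
    (show (0 : ℝ) ∈ Set.Icc (f (max B 0) - max B 0) (f 0 - 0) from
      ⟨by linarith [hB _ hB', le_max_left B 0], by linarith⟩)
  exact ⟨y, hy.1, (sub_eq_zero.mp hfy).symm⟩

section

open scoped Nat

attribute [local instance] Matrix.linftyOpNormedAddCommGroup Matrix.linftyOpNormedRing
  Matrix.linftyOpNormedAlgebra

namespace Matrix

variable {n : Type*} [Fintype n] [DecidableEq n]

lemma hasSum_exp_apply (X : Matrix n n ℝ) (i j : n) :
    HasSum (fun k => ((k ! : ℝ))⁻¹ * (X ^ k) i j) (exp X i j) := by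
  have h := Pi.hasSum.mp (Pi.hasSum.mp (exp_series_hasSum_exp' (𝕂 := ℝ) X) i) j
  simp only [smul_apply, smul_eq_mul] at h
  -- not `simpa`: the topology on `ℝ` seen through the matrix norm agrees only up to unfolding
  exact h

lemma inv_factorial_mul_pow_apply_le_exp_apply {X : Matrix n n ℝ} (hX : ∀ i j, 0 ≤ X i j)
    (k : ℕ) (i j : n) : ((k ! : ℝ))⁻¹ * (X ^ k) i j ≤ exp X i j :=
  le_hasSum (hasSum_exp_apply X i j) k
    fun l _ => mul_nonneg (by positivity) (pow_apply_nonneg hX l i j)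

lemma exp_eq_exp_neg_smul_exp_add_smul_one (X : Matrix n n ℝ) (c : ℝ) :
    exp X = Real.exp (-c) • exp (X + c • 1) := by
  have hcomm : Commute ((-c) • (1 : Matrix n n ℝ)) (X + c • 1) :=
    (Commute.one_left _).smul_left _
  conv_lhs => rw [show X = (-c) • 1 + (X + c • 1) by module]
  rw [exp_add_of_commute _ _ hcomm, smul_one_eq_diagonal, exp_diagonal, Pi.exp_def,
    ← Real.exp_eq_exp_ℝ, ← smul_one_eq_diagonal, smul_one_mul]

lemma add_smul_one_apply_nonneg {X : Matrix n n ℝ} (hX : ∀ i j, i ≠ j → 0 ≤ X i j) (i j : n) :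
    0 ≤ (X + (∑ k, |X k k|) • 1) i j := by
  rw [add_apply, smul_apply, smul_eq_mul]
  rcases eq_or_ne i j with rfl | hij
  · have : -X i i ≤ ∑ k, |X k k| := (neg_le_abs _).trans
      (Finset.single_le_sum (fun k _ => abs_nonneg (X k k)) (Finset.mem_univ i))
    simp only [one_apply_eq, mul_one]
    linarith
  · simpa [one_apply_ne hij] using hX i j hij

lemma exp_apply_nonneg_of_offDiag_nonneg {X : Matrix n n ℝ} (hX : ∀ i j, i ≠ j → 0 ≤ X i j)
    (i j : n) : 0 ≤ exp X i j := by
  rw [exp_eq_exp_neg_smul_exp_add_smul_one X (∑ k, |X k k|), smul_apply, smul_eq_mul]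
  exact mul_nonneg (Real.exp_pos _).le <| (hasSum_exp_apply _ i j).nonneg
    fun k => mul_nonneg (by positivity) (pow_apply_nonneg (add_smul_one_apply_nonneg hX) k i j)

lemma exp_neg_sub_one_mul_tsum_pow_succ {Z : Matrix n n ℝ} (hZ : ‖exp Z‖ < 1) :
    (exp (-Z) - 1) * ∑' k : ℕ, exp Z ^ (k + 1) = 1 := by
  have hinv : exp (-Z) * exp Z = 1 := by
    rw [← exp_add_of_commute _ _ (Commute.neg_left (Commute.refl Z)), neg_add_cancel, exp_zero]
  have hsum : Summable fun k : ℕ => exp Z ^ k := summable_geometric_of_norm_lt_one hZ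
  have hgeom : (1 - exp Z) * ∑' k : ℕ, exp Z ^ k = 1 := mul_neg_geom_series _ hZ
  have hfactor : exp (-Z) - 1 = exp (-Z) * (1 - exp Z) := by rw [mul_sub, mul_one, hinv]
  simp_rw [pow_succ]
  rw [hsum.tsum_mul_right, hfactor, mul_assoc, ← mul_assoc (1 - exp Z), hgeom, one_mul, hinv]

lemma inv_exp_neg_sub_one_apply_ge {Z : Matrix n n ℝ} (hZ : ‖exp Z‖ < 1)
    (hP : ∀ i j, 0 ≤ exp Z i j) (i j : n) : exp Z i j ≤ (exp (-Z) - 1)⁻¹ i j := by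
  rw [inv_eq_right_inv (exp_neg_sub_one_mul_tsum_pow_succ hZ)]
  have hsum : Summable fun k : ℕ => exp Z ^ (k + 1) := by
    simp only [pow_succ]
    exact (summable_geometric_of_norm_lt_one hZ).mul_right (exp Z)
  have h : HasSum (fun k : ℕ => (exp Z ^ (k + 1)) i j) ((∑' k : ℕ, exp Z ^ (k + 1)) i j) :=
    Pi.hasSum.mp (Pi.hasSum.mp hsum.hasSum i) j
  simpa using le_hasSum h 0 fun k _ => pow_apply_nonneg hP (k + 1) i j

lemma inv_diagonal_of_ne_zero {d : n → ℝ} (hd : ∀ i, d i ≠ 0) : (diagonal d)⁻¹ = diagonal d⁻¹ :=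
  inv_eq_right_inv <| by
    rw [diagonal_mul_diagonal, ← diagonal_one]
    exact congrArg diagonal (funext fun i => mul_inv_cancel₀ (hd i))

lemma inv_conj' {U : Matrix n n ℝ} (hU : IsUnit U.det) (M : Matrix n n ℝ) :
    (U⁻¹ * M * U)⁻¹ = U⁻¹ * M⁻¹ * U := by
  rw [mul_inv_rev, mul_inv_rev, nonsing_inv_nonsing_inv _ hU, mul_assoc]

section

variable {m : ℕ}

lemma pow_apply_pos_of_subdiag_pos {N : Matrix (Fin m) (Fin m) ℝ} (hN : ∀ i j, 0 ≤ N i j)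
    (hsub : ∀ (i : ℕ) (hi : i + 1 < m), 0 < N ⟨i + 1, hi⟩ ⟨i, by omega⟩) :
    ∀ (k : ℕ) (hk : k < m), 0 < (N ^ k) ⟨k, hk⟩ ⟨0, by omega⟩
  | 0, _ => by simp
  | k + 1, hk => by
    rw [pow_succ', mul_apply]
    refine lt_of_lt_of_le ?_ (Finset.single_le_sum
      (fun j _ => mul_nonneg (hN _ j) (pow_apply_nonneg hN k j _)) (Finset.mem_univ ⟨k, by omega⟩))
    exact mul_pos (hsub k hk) (pow_apply_pos_of_subdiag_pos hN hsub k (by omega))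

lemma exp_apply_pos_of_subdiag_pos {X : Matrix (Fin m) (Fin m) ℝ}
    (hX : ∀ i j, i ≠ j → 0 ≤ X i j)
    (hsub : ∀ (i : ℕ) (hi : i + 1 < m), 0 < X ⟨i + 1, hi⟩ ⟨i, by omega⟩) (k : ℕ) (hk : k < m) :
    0 < exp X ⟨k, hk⟩ ⟨0, by omega⟩ := by
  set N := X + (∑ k, |X k k|) • 1
  have hN := add_smul_one_apply_nonneg hX
  have hNsub : ∀ (i : ℕ) (hi : i + 1 < m), 0 < N ⟨i + 1, hi⟩ ⟨i, by omega⟩ := fun i hi => by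
    simpa [N, one_apply_ne (show (⟨i + 1, hi⟩ : Fin m) ≠ ⟨i, by omega⟩ by simp)] using hsub i hi
  rw [exp_eq_exp_neg_smul_exp_add_smul_one X (∑ k, |X k k|), smul_apply, smul_eq_mul]
  exact mul_pos (Real.exp_pos _) <| lt_of_lt_of_le
    (mul_pos (by positivity) (pow_apply_pos_of_subdiag_pos hN hNsub k hk))
    (inv_factorial_mul_pow_apply_le_exp_apply hN k _ _)

end

end Matrix

section

variable {m : ℕ} (a : Fin m → ℝ) (g : Fin (m - 1) → ℝ)

lemma igoA_apply_subdiag (j : ℕ) (hj : j + 1 < m) :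
    igoA m a g ⟨j + 1, hj⟩ ⟨j, by omega⟩ = g ⟨j, by omega⟩ := by simp [igoA]

variable {a g} in
lemma igoA_apply_nonneg_of_ne (hg : ∀ i, 0 ≤ g i) {i j : Fin m} (hij : i ≠ j) :
    0 ≤ igoA m a g i j := by
  simp only [igoA, if_neg hij]
  split_ifs
  exacts [hg _, le_rfl]

lemma smul_igoA (c : ℝ) : c • igoA m a g = igoA m (c • a) (c • g) := by
  ext i j
  simp only [igoA, Matrix.smul_apply, Pi.smul_apply, smul_eq_mul]
  split_ifs <;> ring

lemma igoA_zero_right : igoA m a 0 = diagonal (-a) := by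
  ext i j
  simp only [igoA, diagonal_apply, Pi.zero_apply, Pi.neg_apply]
  split_ifs <;> rfl

lemma continuous_igoA_smul_right : Continuous fun c : ℝ => igoA m a (c • g) := by
  refine continuous_matrix fun i j => ?_
  simp only [igoA, Pi.smul_apply, smul_eq_mul]
  split_ifs
  exacts [continuous_const, continuous_id.mul continuous_const, continuous_const]

lemma igoA_eq_diagonal_conj {c : ℝ} (hc : c ≠ 0) :
    igoA m a g = diagonal (fun i : Fin m => c ^ (i : ℕ))⁻¹ * igoA m a (c • g) *
      diagonal (fun i : Fin m => c ^ (i : ℕ)) := by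
  ext i j
  rw [mul_diagonal, diagonal_mul]
  simp only [igoA, Pi.inv_apply, Pi.smul_apply, smul_eq_mul]
  split_ifs with hij hsub
  · subst hij
    field_simp
  · simp only [hsub, pow_succ]
    field_simp
  · simp

lemma exists_norm_exp_igoA_lt_one (ha : ∀ i, 0 < a i) :
    ∃ c : ℝ, 0 < c ∧ ‖exp (igoA m a (c • g))‖ < 1 := by
  have h0 : ‖exp (igoA m a ((0 : ℝ) • g))‖ < 1 := by
    rw [zero_smul, igoA_zero_right, exp_diagonal, linfty_opNorm_diagonal, pi_norm_lt_iff one_pos]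
    intro i
    rw [Pi.exp_def, ← Real.exp_eq_exp_ℝ, Real.norm_eq_abs, Real.abs_exp, Real.exp_lt_one_iff]
    exact neg_lt_zero.mpr (ha i)
  have hcont := (NormedSpace.exp_continuous.comp (continuous_igoA_smul_right a g)).norm
  obtain ⟨c, hc1, hc0⟩ := (((hcont.tendsto 0).eventually_lt_const h0).filter_mono
    nhdsWithin_le_nhds |>.and (self_mem_nhdsWithin (s := Set.Ioi (0 : ℝ)))).exists
  exact ⟨c, hc0, hc1⟩

end

variable {m : ℕ} {a : Fin m → ℝ} {g : Fin (m - 1) → ℝ}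

theorem isUnit_det_exp_neg_smul_igoA_sub_one_and_inv_apply_pos (hm : 1 ≤ m)
    (ha : ∀ i, 0 < a i) (hg : ∀ i, 0 < g i) {ξ : ℝ} (hξ : 0 < ξ) :
    IsUnit (exp (-ξ • igoA m a g) - 1).det ∧
      0 < (exp (-ξ • igoA m a g) - 1)⁻¹ ⟨m - 1, by omega⟩ ⟨0, by omega⟩ := by
  obtain ⟨c, hc, hnorm⟩ :=
    exists_norm_exp_igoA_lt_one (ξ • a) (ξ • g) fun i => mul_pos hξ (ha i)
  set Z := igoA m (ξ • a) (c • ξ • g)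
  set d : Fin m → ℝ := fun i => c ^ (i : ℕ)
  have hd : ∀ i, d i ≠ 0 := fun i => pow_ne_zero _ hc.ne'
  have hUinv : (diagonal d)⁻¹ = diagonal d⁻¹ := inv_diagonal_of_ne_zero hd
  have hU : IsUnit (diagonal d).det := by
    rw [det_diagonal]
    exact isUnit_iff_ne_zero.mpr (Finset.prod_ne_zero_iff.mpr fun i _ => hd i)
  have hconj : exp (-ξ • igoA m a g) - 1 = (diagonal d)⁻¹ * (exp (-Z) - 1) * diagonal d := by
    have hZ : -ξ • igoA m a g = (diagonal d)⁻¹ * (-Z) * diagonal d := by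
      rw [hUinv, igoA_eq_diagonal_conj a g hc.ne', neg_smul, Matrix.mul_neg, Matrix.neg_mul,
        ← Matrix.smul_mul, ← Matrix.mul_smul, smul_igoA, smul_comm ξ c g]
    rw [hZ, exp_conj' _ _ ((isUnit_iff_isUnit_det _).mpr hU), Matrix.mul_sub, Matrix.sub_mul,
      Matrix.mul_one, nonsing_inv_mul _ hU]
  have hcξg : ∀ k, 0 < (c • ξ • g) k := fun k => mul_pos hc (mul_pos hξ (hg k))
  have hZoff : ∀ i j, i ≠ j → 0 ≤ Z i j := fun i j hij =>
    igoA_apply_nonneg_of_ne (fun k => (hcξg k).le) hij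
  have hZnonneg : ∀ i j, 0 ≤ exp Z i j := exp_apply_nonneg_of_offDiag_nonneg hZoff
  have hZcorner : 0 < exp Z ⟨m - 1, by omega⟩ ⟨0, by omega⟩ :=
    exp_apply_pos_of_subdiag_pos hZoff
      (fun i hi => by simpa only [Z, igoA_apply_subdiag] using hcξg _) _ _
  refine ⟨?_, ?_⟩
  · rw [hconj, det_conj' ((isUnit_iff_isUnit_det _).mpr hU)]
    exact isUnit_det_of_right_inverse (exp_neg_sub_one_mul_tsum_pow_succ hnorm)
  · rw [hconj, inv_conj' hU, hUinv, mul_diagonal, diagonal_mul]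
    exact mul_pos (mul_pos (inv_pos.mpr (pow_pos hc _)) <| hZcorner.trans_le
      (inv_exp_neg_sub_one_apply_ge hnorm hZnonneg _ _)) (pow_pos hc _)

noncomputable def igoGain (m : ℕ) (a : Fin m → ℝ) (g : Fin (m - 1) → ℝ) (ξ : ℝ) : ℝ :=
  igoC m ⬝ᵥ ((exp (-ξ • igoA m a g) - 1)⁻¹ : Matrix (Fin m) (Fin m) ℝ) *ᵥ igoB m

lemma igoGain_eq_inv_apply (hm : 1 ≤ m) (ξ : ℝ) :
    igoGain m a g ξ = (exp (-ξ • igoA m a g) - 1)⁻¹ ⟨m - 1, by omega⟩ ⟨0, by omega⟩ := by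
  have hB : igoB m = Pi.single ⟨0, by omega⟩ 1 := by
    ext i; simp [igoB, Pi.single_apply, Fin.ext_iff]
  have hC : igoC m = Pi.single ⟨m - 1, by omega⟩ 1 := by
    ext i; simp [igoC, Pi.single_apply, Fin.ext_iff]
  rw [igoGain, hB, hC, single_one_dotProduct, mulVec_single_one, col_apply]

lemma igoGain_pos (hm : 1 ≤ m) (ha : ∀ i, 0 < a i) (hg : ∀ i, 0 < g i) {ξ : ℝ} (hξ : 0 < ξ) :
    0 < igoGain m a g ξ := by
  rw [igoGain_eq_inv_apply hm]
  exact (isUnit_det_exp_neg_smul_igoA_sub_one_and_inv_apply_pos hm ha hg hξ).2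

lemma continuousOn_igoGain (hm : 1 ≤ m) (ha : ∀ i, 0 < a i) (hg : ∀ i, 0 < g i) :
    ContinuousOn (igoGain m a g) (Set.Ioi 0) := by
  intro ξ hξ
  have hM : Continuous fun t : ℝ => (exp (-t • igoA m a g) - 1 : Matrix (Fin m) (Fin m) ℝ) :=
    (NormedSpace.exp_continuous.comp (continuous_neg.smul continuous_const)).sub continuous_const
  have hdet := (isUnit_det_exp_neg_smul_igoA_sub_one_and_inv_apply_pos hm ha hg hξ).1.ne_zero
  have hdetinv : ContinuousAt Ring.inverse (exp (-ξ • igoA m a g) - 1).det := by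
    simpa only [Ring.inverse_eq_inv'] using continuousAt_inv₀ hdet
  have hinv : ContinuousAt (fun t => (exp (-t • igoA m a g) - 1)⁻¹) ξ :=
    ContinuousAt.comp (f := fun t : ℝ => exp (-t • igoA m a g) - 1)
      (continuousAt_matrix_inv _ hdetinv) hM.continuousAt
  rw [funext (igoGain_eq_inv_apply hm)]
  exact ((continuous_apply_apply _ _).continuousAt.comp hinv).continuousWithinAt

end

theorem stmt5_general (m : ℕ) (hm : 1 ≤ m) (a : Fin m → ℝ) (g : Fin (m - 1) → ℝ)
    (ha : ∀ i, 0 < a i) (hg : ∀ i, 0 < g i)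
    (Φ F : ℝ → ℝ) (hΦcont : ContinuousOn Φ (Set.Ici 0)) (hFcont : ContinuousOn F (Set.Ici 0))
    (Φ₁ Φ₂ F₁ F₂ : ℝ) (hΦ₁ : 0 < Φ₁) (hF₁ : 0 < F₁)
    (hΦ : ∀ y ≥ (0 : ℝ), Φ₁ ≤ Φ y ∧ Φ y ≤ Φ₂)
    (hF : ∀ y ≥ (0 : ℝ), F₁ ≤ F y ∧ F y ≤ F₂) :
    (∃ y ≥ (0 : ℝ), y = igoR m a g Φ F y) ∧
    (∀ y ≥ (0 : ℝ), y = igoR m a g Φ F y → 0 < y) := by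
  change (∃ y ≥ (0 : ℝ), y = F y * igoGain m a g (Φ y)) ∧
    (∀ y ≥ (0 : ℝ), y = F y * igoGain m a g (Φ y) → 0 < y)
  have hΦpos : ∀ y ≥ (0 : ℝ), 0 < Φ y := fun y hy => hΦ₁.trans_le (hΦ y hy).1
  have hRpos : ∀ y ≥ (0 : ℝ), 0 < F y * igoGain m a g (Φ y) := fun y hy =>
    mul_pos (hF₁.trans_le (hF y hy).1) (igoGain_pos hm ha hg (hΦpos y hy))
  have hgain := continuousOn_igoGain hm ha hg
  obtain ⟨K, hK⟩ := isCompact_Icc.bddAbove_image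
    (hgain.mono fun ξ hξ => hΦ₁.trans_le hξ.1 : ContinuousOn (igoGain m a g) (Set.Icc Φ₁ Φ₂))
  refine ⟨exists_eq_apply_of_continuousOn_Ici ?_ (hRpos 0 le_rfl).le (B := F₂ * K) ?_,
    fun y hy hyR => hyR ▸ hRpos y hy⟩
  · exact hFcont.mul (hgain.comp hΦcont fun y hy => hΦpos y hy)
  · intro y hy
    exact mul_le_mul (hF y hy).2 (hK ⟨Φ y, hΦ y hy, rfl⟩) (igoGain_pos hm ha hg (hΦpos y hy)).le
      ((hF₁.trans_le (hF y hy).1).trans_le (hF y hy).2).le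

theorem stmt5 (m : ℕ) (hm : 1 ≤ m) (a : Fin m → ℝ) (g : Fin (m - 1) → ℝ)
    (ha : ∀ i, 0 < a i) (hg : ∀ i, 0 < g i)
    (Φ F : ℝ → ℝ) (hΦcont : ContinuousOn Φ (Set.Ici 0)) (hFcont : ContinuousOn F (Set.Ici 0))
    (Φ₁ Φ₂ F₁ F₂ : ℝ) (hΦ₁ : 0 < Φ₁) (hΦ₂ : 0 < Φ₂) (hF₁ : 0 < F₁) (hF₂ : 0 < F₂)
    (hΦ : ∀ y ≥ (0 : ℝ), Φ₁ ≤ Φ y ∧ Φ y ≤ Φ₂)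
    (hF : ∀ y ≥ (0 : ℝ), F₁ ≤ F y ∧ F y ≤ F₂) :
    (∃ y ≥ (0 : ℝ), y = igoR m a g Φ F y) ∧
    (∀ y ≥ (0 : ℝ), y = igoR m a g Φ F y → 0 < y) :=
  stmt5_general m hm a g ha hg Φ F hΦcont hFcont Φ₁ Φ₂ F₁ F₂ hΦ₁ hF₁ hΦ hF
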